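/- arXiv:2101.02159 — 2 statements merged into one kernel-verified Lean document; each statement's English description precedes it below -/
import Mathlib

section
/- Let n and f be natural numbers with 3*f < n, and let (E_i)_{i ∈ C} be a finite family of pairwise disjoint subsets of a set of n - f honest validators, each satisfying 2*|E_i| > n - 2*f (i.e., |E_i| + f > n/2). Then |C| ≤ 3. -/
/-- At most 3 pairwise-incomparable units of a single validator can be
simultaneously endorsed: the honest endorser sets `E i` are pairwise
disjoint subsets of the `n - f` honest validators, each of size
`> n/2 - f`; if `3f < n` then there are at most `3` of them. -/
theorem stmt_2 {V ι : Type*} [DecidableEq V] (n f : ℕ) (hnf : 3 * f < n)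
    (Honest : Finset V) (hH : Honest.card = n - f)
    (C : Finset ι) (E : ι → Finset V)
    (hsub : ∀ i ∈ C, E i ⊆ Honest)
    (hdisj : ∀ i ∈ C, ∀ j ∈ C, i ≠ j → Disjoint (E i) (E j))
    (hbig : ∀ i ∈ C, 2 * (E i).card > n - 2 * f) :
    C.card ≤ 3 := by
  by_contra h
  push_neg at h
  have hsum : ∑ i ∈ C, (E i).card ≤ n - f := by
    rw [← Finset.card_biUnion hdisj, ← hH]
    exact Finset.card_le_card (Finset.biUnion_subset.mpr hsub)
  have hlow : C.card * (n - 2 * f + 1) ≤ 2 * ∑ i ∈ C, (E i).card := by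
    rw [Finset.mul_sum]
    calc C.card * (n - 2 * f + 1) = ∑ _i ∈ C, (n - 2 * f + 1) := by
          rw [Finset.sum_const, smul_eq_mul]
      _ ≤ ∑ i ∈ C, 2 * (E i).card := Finset.sum_le_sum fun i hi => hbig i hi
  have h4 : 4 * (n - 2 * f + 1) ≤ C.card * (n - 2 * f + 1) :=
    Nat.mul_le_mul_right _ h
  omega
end

section
/- Let B be a finite rooted tree, with a fixed tie-breaking total order, and let opinion : V → B be a function with |V| = n ≥ 1 and n odd. If more than n/2 of the validators have opinion descending from (or equal to) a node b, then the GHOST rule applied from the root outputs a leaf that is a descendant of b (or b itself). -/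
/-- Majority property of the GHOST rule: if strictly more than half of
the `n` validators have their opinion descending from a node `b`, then
any greedy GHOST path from the root (always moving to a child of
maximal total) outputs, at any leaf it reaches, a descendant of `b`
(or `b` itself). -/
theorem stmt_12 {V B : Type*} [Fintype V] [Fintype B] [PartialOrder B]
    [DecidableEq V] [DecidableEq B] [DecidableRel ((· ≤ ·) : B → B → Prop)]
    (n : ℕ) (hn : Fintype.card V = n) (hn1 : 1 ≤ n) (hodd : Odd n)
    (G : B) (hG : ∀ x : B, G ≤ x)
    (opinion : V → B)
    (children : B → Finset B)
    (hchild : ∀ b x : B, b < x ↔ ∃! c : B, c ∈ children b ∧ c ≤ x)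
    (total : B → ℕ)
    (htotal : ∀ b : B, total b = (Finset.univ.filter (fun v : V => b ≤ opinion v)).card)
    (b : B) (hmaj : 2 * total b > n)
    (p : ℕ → B) (hp0 : p 0 = G)
    (hstep : ∀ i : ℕ, (children (p i) ≠ ∅ →
        p (i + 1) ∈ children (p i) ∧ ∀ c ∈ children (p i), total c ≤ total (p (i + 1)))
      ∧ (children (p i) = ∅ → p (i + 1) = p i)) :
    ∀ i : ℕ, children (p i) = ∅ → b ≤ p i := by
  -- every child is strictly above its parent
  have hlt : ∀ a c : B, c ∈ children a → a < c := by
    intro a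
    have hwf : WellFoundedLT B := Finite.to_wellFoundedLT
    intro c
    induction c using WellFoundedLT.induction with
    | ind c ih =>
      intro hc
      by_contra hna
      have hne : ¬ ∃! c' : B, c' ∈ children a ∧ c' ≤ c := fun h => hna ((hchild a c).mpr h)
      -- c itself is a witness; non-uniqueness gives another child below c
      have : ∃ c', (c' ∈ children a ∧ c' ≤ c) ∧ c' ≠ c := by
        by_contra h
        push_neg at h
        exact hne ⟨c, ⟨hc, le_refl c⟩, fun y hy => h y hy⟩
      obtain ⟨c', ⟨hc'mem, hc'le⟩, hc'ne⟩ := this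
      have hlt' : c' < c := lt_of_le_of_ne hc'le hc'ne
      have : a < c' := ih c' hlt' hc'mem
      exact hna (this.trans hlt')
  -- distinct children of the same node have disjoint opinion sets
  have hdisj : ∀ a c c' : B, c ∈ children a → c' ∈ children a → c ≠ c' →
      ∀ x : B, c ≤ x → c' ≤ x → False := by
    intro a c c' hc hc' hne x hcx hc'x
    have hax : a < x := (hlt a c hc).trans_le hcx
    obtain ⟨u, _, hu⟩ := (hchild a x).mp hax
    exact hne ((hu c ⟨hc, hcx⟩).trans (hu c' ⟨hc', hc'x⟩).symm)
  -- totals are monotone (antitone in the order)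
  have hmono : ∀ c d : B, c ≤ d → total d ≤ total c := by
    intro c d hcd
    rw [htotal, htotal]
    apply Finset.card_le_card
    intro v hv
    simp only [Finset.mem_filter, Finset.mem_univ, true_and] at hv ⊢
    exact hcd.trans hv
  -- the invariant along the path
  have hinv : ∀ i : ℕ, b ≤ p i ∨ p i ≤ b := by
    intro i
    induction i with
    | zero => right; rw [hp0]; exact hG b
    | succ i ih =>
      rcases eq_or_ne (children (p i)) ∅ with hemp | hne
      · rw [((hstep i).2 hemp)]; exact ih
      · have hstep' := (hstep i).1 hne
        rcases ih with hbp | hpb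
        · left; exact hbp.trans (hlt _ _ hstep'.1).le
        · rcases eq_or_lt_of_le hpb with heq | hlt'
          · left; rw [← heq]; exact (hlt _ _ hstep'.1).le
          · -- p i < b : the unique child towards b has majority total
            obtain ⟨c, ⟨hcmem, hcb⟩, _⟩ := (hchild (p i) b).mp hlt'
            have hcmaj : 2 * total c > n := lt_of_lt_of_le hmaj
              (Nat.mul_le_mul_left 2 (hmono c b hcb))
            by_cases hceq : p (i + 1) = c
            · right; rw [hceq]; exact hcb
            · exfalso
              have hpmaj : 2 * total (p (i + 1)) > n :=
                lt_of_lt_of_le hcmaj (Nat.mul_le_mul_left 2 (hstep'.2 c hcmem))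
              -- the two children have disjoint supporter sets, each > n/2
              have hdis : Disjoint
                  (Finset.univ.filter (fun v : V => c ≤ opinion v))
                  (Finset.univ.filter (fun v : V => p (i + 1) ≤ opinion v)) := by
                rw [Finset.disjoint_left]
                intro v hv hv'
                simp only [Finset.mem_filter, Finset.mem_univ, true_and] at hv hv'
                exact hdisj (p i) c (p (i + 1)) hcmem hstep'.1
                  (fun h => hceq h.symm) (opinion v) hv hv'
              have hcard := Finset.card_union_of_disjoint hdis
              have hle : (Finset.univ.filter (fun v : V => c ≤ opinion v) ∪
                  Finset.univ.filter (fun v : V => p (i + 1) ≤ opinion v)).card ≤ n := by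
                rw [← hn]
                exact Finset.card_le_card (Finset.subset_univ _) |>.trans
                  (le_of_eq (by simp))
              rw [hcard] at hle
              rw [htotal] at hcmaj hpmaj
              omega
  -- conclude at a leaf
  intro i hleaf
  rcases hinv i with h | h
  · exact h
  · rcases eq_or_lt_of_le h with heq | hlt'
    · exact le_of_eq heq.symm
    · obtain ⟨c, ⟨hcmem, _⟩, _⟩ := (hchild (p i) b).mp hlt'
      rw [hleaf] at hcmem
      exact absurd hcmem (Finset.notMem_empty c)
end
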